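/- arXiv:2603.20038 — 2 statements merged into one kernel-verified Lean document; each statement's English description precedes it below -/
import Mathlib

section
/- For real numbers 0 ≤ r₀ ≤ r₁, 0 ≤ s₀ ≤ s₁ and angles φ₀ ≤ φ₁, θ₀ ≤ θ₁, the Minkowski product of the annular sectors Ann(r₀,r₁;φ₀,φ₁) and Ann(s₀,s₁;θ₀,θ₁) equals the annular sector Ann(r₀s₀, r₁s₁; φ₀+θ₀, φ₁+θ₁). -/
open Set Complex

/-- The annular sector `Ann(r₀,r₁;φ₀,φ₁) ⊆ ℂ`. -/
def Ann (r₀ r₁ φ₀ φ₁ : ℝ) : Set ℂ :=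
  {z | ∃ r ∈ Set.Icc r₀ r₁, ∃ φ ∈ Set.Icc φ₀ φ₁, z = (r : ℂ) * Complex.exp (φ * Complex.I)}

lemma mul_decomp (r₀ r₁ s₀ s₁ t : ℝ) (hr₀ : 0 ≤ r₀) (hr : r₀ ≤ r₁) (hs₀ : 0 ≤ s₀)
    (hs : s₀ ≤ s₁) (ht : t ∈ Set.Icc (r₀ * s₀) (r₁ * s₁)) :
    ∃ a ∈ Set.Icc r₀ r₁, ∃ b ∈ Set.Icc s₀ s₁, t = a * b := by
  obtain ⟨ht0, ht1⟩ := ht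
  have htnn : 0 ≤ t := le_trans (mul_nonneg hr₀ hs₀) ht0
  rcases eq_or_lt_of_le hs₀ with hs1eq | hs1pos
  · rcases le_or_gt s₁ 0 with hz | hz
    · -- s₁ = 0, so t = 0
      have hs1 : s₁ = 0 := le_antisymm hz (le_trans hs₀ hs)
      have : t = 0 := le_antisymm (by simpa [hs1] using ht1) htnn
      exact ⟨r₀, ⟨le_refl _, hr⟩, s₀, ⟨le_refl _, hs⟩, by
        simp [this, ← hs1eq, hs1]⟩
    · set a := max r₀ (t / s₁) with ha
      have ha0 : r₀ ≤ a := le_max_left _ _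
      have ha1 : a ≤ r₁ := max_le hr ((div_le_iff₀ hz).2 ht1)
      rcases eq_or_lt_of_le (le_trans hr₀ ha0) with haz | hap
      · -- a = 0 ⇒ t = 0
        have ht' : t = 0 := by
          have h1 : t / s₁ ≤ 0 := haz ▸ le_max_right r₀ (t / s₁)
          have h2 : t ≤ 0 := by
            rcases div_nonpos_iff.1 h1 with ⟨_, h⟩ | ⟨h, _⟩
            · linarith
            · exact h
          linarith
        exact ⟨a, ⟨ha0, ha1⟩, s₀, ⟨le_refl _, hs⟩, by simp [ht', ← hs1eq, ← haz]⟩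
      · refine ⟨a, ⟨ha0, ha1⟩, t / a, ⟨?_, ?_⟩, by field_simp⟩
        · rw [le_div_iff₀ hap]
          rcases max_cases r₀ (t / s₁) with ⟨h1, _⟩ | ⟨h1, _⟩
          · rw [ha, h1]; linarith
          · rw [ha, h1, mul_comm, div_mul_eq_mul_div, div_le_iff₀ hz]
            nlinarith
        · rw [div_le_iff₀ hap]
          have : t / s₁ ≤ a := le_max_right _ _
          calc t = (t / s₁) * s₁ := by field_simp
            _ ≤ a * s₁ := by nlinarith
            _ = s₁ * a := mul_comm _ _
  · -- here we only needed general case; above covers everything via same scheme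
    rcases le_or_gt s₁ 0 with hz | hz
    · exact absurd (lt_of_lt_of_le hs1pos hs) (not_lt.2 hz)
    · set a := max r₀ (t / s₁) with ha
      have ha0 : r₀ ≤ a := le_max_left _ _
      have ha1 : a ≤ r₁ := max_le hr ((div_le_iff₀ hz).2 ht1)
      rcases eq_or_lt_of_le (le_trans hr₀ ha0) with haz | hap
      · have ht' : t = 0 := by
          have h1 : t / s₁ ≤ 0 := haz ▸ le_max_right r₀ (t / s₁)
          have h2 : t ≤ 0 := by
            rcases div_nonpos_iff.1 h1 with ⟨_, h⟩ | ⟨h, _⟩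
            · linarith
            · exact h
          linarith
        have hr0z : r₀ = 0 := le_antisymm (haz ▸ le_max_left r₀ (t / s₁)) hr₀
        exact ⟨r₀, ⟨le_refl _, hr⟩, s₀, ⟨le_refl _, hs⟩, by simp [ht', hr0z]⟩
      · refine ⟨a, ⟨ha0, ha1⟩, t / a, ⟨?_, ?_⟩, by field_simp⟩
        · rw [le_div_iff₀ hap]
          rcases max_cases r₀ (t / s₁) with ⟨h1, _⟩ | ⟨h1, _⟩
          · rw [ha, h1]; linarith
          · rw [ha, h1, mul_comm, div_mul_eq_mul_div, div_le_iff₀ hz]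
            nlinarith
        · rw [div_le_iff₀ hap]
          have : t / s₁ ≤ a := le_max_right _ _
          calc t = (t / s₁) * s₁ := by field_simp
            _ ≤ a * s₁ := by nlinarith
            _ = s₁ * a := mul_comm _ _

lemma add_decomp (φ₀ φ₁ θ₀ θ₁ t : ℝ) (hφ : φ₀ ≤ φ₁) (hθ : θ₀ ≤ θ₁)
    (ht : t ∈ Set.Icc (φ₀ + θ₀) (φ₁ + θ₁)) :
    ∃ a ∈ Set.Icc φ₀ φ₁, ∃ b ∈ Set.Icc θ₀ θ₁, t = a + b := by
  obtain ⟨ht0, ht1⟩ := ht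
  refine ⟨max φ₀ (t - θ₁), ⟨le_max_left _ _, max_le hφ (by linarith)⟩,
    t - max φ₀ (t - θ₁), ⟨?_, ?_⟩, by ring⟩
  · rcases max_cases φ₀ (t - θ₁) with ⟨h1, _⟩ | ⟨h1, _⟩ <;> rw [h1] <;> linarith
  · have := le_max_right φ₀ (t - θ₁); linarith

theorem ann_minkowski_product (r₀ r₁ s₀ s₁ φ₀ φ₁ θ₀ θ₁ : ℝ)
    (hr₀ : 0 ≤ r₀) (hr : r₀ ≤ r₁) (hs₀ : 0 ≤ s₀) (hs : s₀ ≤ s₁)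
    (hφ : φ₀ ≤ φ₁) (hθ : θ₀ ≤ θ₁) :
    Set.image2 (· * ·) (Ann r₀ r₁ φ₀ φ₁) (Ann s₀ s₁ θ₀ θ₁) =
      Ann (r₀ * s₀) (r₁ * s₁) (φ₀ + θ₀) (φ₁ + θ₁) := by
  ext z
  simp only [Set.mem_image2, Ann, Set.mem_setOf_eq]
  constructor
  · rintro ⟨x, ⟨a, ha, α, hα, rfl⟩, y, ⟨b, hb, β, hβ, rfl⟩, rfl⟩
    refine ⟨a * b, ⟨?_, ?_⟩, α + β, ⟨by obtain ⟨h1,_⟩ := hα; obtain ⟨h2,_⟩ := hβ; linarith,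
      by obtain ⟨_,h1⟩ := hα; obtain ⟨_,h2⟩ := hβ; linarith⟩, ?_⟩
    · exact mul_le_mul ha.1 hb.1 hs₀ (le_trans hr₀ ha.1)
    · exact mul_le_mul ha.2 hb.2 (le_trans hs₀ hb.1) (le_trans hr₀ (le_trans ha.1 ha.2))
    · push_cast
      rw [add_mul, Complex.exp_add]
      ring
  · rintro ⟨t, ht, ψ, hψ, rfl⟩
    obtain ⟨a, ha, b, hb, rfl⟩ := mul_decomp r₀ r₁ s₀ s₁ t hr₀ hr hs₀ hs ht
    obtain ⟨α, hα, β, hβ, rfl⟩ := add_decomp φ₀ φ₁ θ₀ θ₁ ψ hφ hθ hψ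
    refine ⟨(a : ℂ) * Complex.exp (α * Complex.I), ⟨a, ha, α, hα, rfl⟩,
      (b : ℂ) * Complex.exp (β * Complex.I), ⟨b, hb, β, hβ, rfl⟩, ?_⟩
    push_cast
    rw [add_mul, Complex.exp_add]
    ring
end

section
/- Let 0 ≤ r₀ ≤ r₁, 0 ≤ φ₀ ≤ φ₁ ≤ 2π with Δ := φ₁ − φ₀ < π. Define A := (r₁/cos(Δ/2))e^{iφ₀}, B := (r₁/cos(Δ/2))e^{iφ₁}, C := r₀e^{iφ₁}, D := r₀e^{iφ₀}. Then the annular sector Ann(r₀,r₁;φ₀,φ₁) is contained in the convex hull of {A, B, C, D}. -/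
open Set Complex Real

lemma sin_comb_aux (φ₀ φ₁ φ : ℝ) :
    (Real.sin (φ₁ - φ₀) : ℂ) * Complex.exp (φ * Complex.I)
      = (Real.sin (φ₁ - φ) : ℂ) * Complex.exp (φ₀ * Complex.I)
        + (Real.sin (φ - φ₀) : ℂ) * Complex.exp (φ₁ * Complex.I) := by
  rw [Complex.exp_mul_I, Complex.exp_mul_I, Complex.exp_mul_I]
  rw [← Complex.ofReal_cos, ← Complex.ofReal_sin, ← Complex.ofReal_cos, ← Complex.ofReal_sin,
    ← Complex.ofReal_cos, ← Complex.ofReal_sin]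
  simp only [Complex.ext_iff, Complex.add_re, Complex.add_im, Complex.mul_re, Complex.mul_im,
    Complex.ofReal_re, Complex.ofReal_im, Complex.I_re, Complex.I_im,
    Real.sin_sub, Real.cos_sub]
  constructor <;> ring

lemma seg_smul_aux {a b r : ℝ} (ha : a ≤ r) (hb : r ≤ b) (w : ℂ) :
    (r:ℂ) * w ∈ segment ℝ ((a:ℂ)*w) ((b:ℂ)*w) := by
  have hr : r ∈ segment ℝ a b := by rw [segment_eq_Icc (ha.trans hb)]; exact ⟨ha, hb⟩
  obtain ⟨t, s, ht, hs, hts, rfl⟩ := hr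
  exact ⟨t, s, ht, hs, hts, by simp only [Complex.real_smul, smul_eq_mul]; push_cast; ring⟩

lemma bounds_aux {Δ θ : ℝ} (hΔ0 : 0 < Δ) (hΔπ : Δ < π) (hθ0 : 0 ≤ θ) (hθΔ : θ ≤ Δ) :
    Real.sin Δ ≤ Real.sin (Δ - θ) + Real.sin θ ∧
    (Real.sin (Δ - θ) + Real.sin θ) * Real.cos (Δ/2) ≤ Real.sin Δ := by
  have hs2 := Real.sin_two_mul (Δ/2)
  have hc2 := Real.cos_two_mul (Δ/2)
  rw [show (2:ℝ)*(Δ/2) = Δ by ring] at hs2 hc2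
  have hpy := Real.sin_sq_add_cos_sq (Δ/2)
  have e1 : Real.sin (Δ-θ) + Real.sin θ = 2 * Real.sin (Δ/2) * Real.cos (Δ/2 - θ) := by
    rw [Real.sin_sub, Real.cos_sub, hs2, hc2]
    linear_combination (-2*Real.sin θ) * hpy
  have hsin : 0 < Real.sin (Δ/2) := Real.sin_pos_of_pos_of_lt_pi (by linarith) (by linarith [Real.pi_pos])
  have hcle : Real.cos (Δ/2) ≤ Real.cos (Δ/2 - θ) := by
    rw [← Real.cos_abs (Δ/2 - θ)]
    apply Real.cos_le_cos_of_nonneg_of_le_pi (abs_nonneg _) (by linarith [Real.pi_pos])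
    rw [abs_le]; constructor <;> linarith
  have hc1 : Real.cos (Δ/2 - θ) ≤ 1 := Real.cos_le_one _
  have hcpos : 0 < Real.cos (Δ/2) := Real.cos_pos_of_mem_Ioo ⟨by linarith [Real.pi_pos], by linarith⟩
  constructor
  · rw [e1, hs2]; nlinarith
  · rw [e1, hs2]
    nlinarith [mul_nonneg (mul_nonneg (by linarith : (0:ℝ) ≤ 2*Real.sin (Δ/2)) hcpos.le)
      (by linarith : 0 ≤ 1 - Real.cos (Δ/2-θ))]

lemma scale_aux {a b s r : ℝ} (hs : s ≠ 0) (hab : a + b ≠ 0) (e₀ e₁ z : ℂ)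
    (hkey : (s:ℂ) * z = (a:ℂ)*e₀ + (b:ℂ)*e₁) :
    (r:ℂ) * z = ((r*(a+b)/s : ℝ):ℂ) * (((a/(a+b) : ℝ):ℂ)*e₀ + ((b/(a+b) : ℝ):ℂ)*e₁) := by
  have hsC : (s:ℂ) ≠ 0 := Complex.ofReal_ne_zero.mpr hs
  have habC : ((a:ℂ) + (b:ℂ)) ≠ 0 := by
    rw [← Complex.ofReal_add]; exact Complex.ofReal_ne_zero.mpr hab
  have hz : z = ((a:ℂ)*e₀ + (b:ℂ)*e₁)/(s:ℂ) := by
    rw [eq_div_iff hsC]; linear_combination hkey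
  rw [hz]; push_cast; field_simp

theorem ann_subset_soft_polygonal_enclosure (r₀ r₁ φ₀ φ₁ : ℝ)
    (hr₀ : 0 ≤ r₀) (hr : r₀ ≤ r₁) (hφ₀ : 0 ≤ φ₀) (hφ : φ₀ ≤ φ₁) (hφ₁ : φ₁ ≤ 2 * π)
    (hΔ : φ₁ - φ₀ < π)
    (A : ℂ) (hA : A = (↑(r₁ / Real.cos ((φ₁ - φ₀) / 2)) : ℂ) * Complex.exp (φ₀ * Complex.I))
    (B : ℂ) (hB : B = (↑(r₁ / Real.cos ((φ₁ - φ₀) / 2)) : ℂ) * Complex.exp (φ₁ * Complex.I))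
    (C : ℂ) (hC : C = (r₀ : ℂ) * Complex.exp (φ₁ * Complex.I))
    (D : ℂ) (hD : D = (r₀ : ℂ) * Complex.exp (φ₀ * Complex.I)) :
    Ann r₀ r₁ φ₀ φ₁ ⊆ convexHull ℝ ({A, B, C, D} : Set ℂ) := by
  intro z hz
  obtain ⟨r, ⟨hrr₀, hrr₁⟩, φ, ⟨hφl, hφr⟩, rfl⟩ := hz
  have hAm : A ∈ convexHull ℝ ({A, B, C, D} : Set ℂ) := subset_convexHull ℝ _ (by simp)
  have hBm : B ∈ convexHull ℝ ({A, B, C, D} : Set ℂ) := subset_convexHull ℝ _ (by simp)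
  have hCm : C ∈ convexHull ℝ ({A, B, C, D} : Set ℂ) := subset_convexHull ℝ _ (by simp)
  have hDm : D ∈ convexHull ℝ ({A, B, C, D} : Set ℂ) := subset_convexHull ℝ _ (by simp)
  have hconv := convex_convexHull ℝ ({A, B, C, D} : Set ℂ)
  have hcpos : 0 < Real.cos ((φ₁ - φ₀)/2) :=
    Real.cos_pos_of_mem_Ioo ⟨by linarith [Real.pi_pos], by linarith⟩
  rcases eq_or_lt_of_le hφ with h0 | h0
  · -- degenerate case φ₀ = φ₁
    have hφeq : φ = φ₀ := le_antisymm (h0 ▸ hφr) hφl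
    subst hφeq
    have hAm' : ((r₁:ℂ) * Complex.exp (φ * Complex.I)) ∈ convexHull ℝ ({A, B, C, D} : Set ℂ) := by
      have hAeq : A = (r₁ : ℂ) * Complex.exp (φ * Complex.I) := by
        rw [hA, ← h0]; norm_num
      rw [← hAeq]; exact hAm
    have hDm' : ((r₀:ℂ) * Complex.exp (φ * Complex.I)) ∈ convexHull ℝ ({A, B, C, D} : Set ℂ) := by
      rw [← hD]; exact hDm
    exact hconv.segment_subset hDm' hAm' (seg_smul_aux hrr₀ hrr₁ _)
  · -- main case φ₀ < φ₁
    have hs : 0 < Real.sin (φ₁ - φ₀) := Real.sin_pos_of_pos_of_lt_pi (by linarith) hΔ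
    have hα : 0 ≤ Real.sin (φ₁ - φ) :=
      Real.sin_nonneg_of_nonneg_of_le_pi (by linarith) (by linarith)
    have hβ : 0 ≤ Real.sin (φ - φ₀) :=
      Real.sin_nonneg_of_nonneg_of_le_pi (by linarith) (by linarith)
    obtain ⟨hlow, hhigh⟩ := bounds_aux (Δ := φ₁ - φ₀) (θ := φ - φ₀) (by linarith) hΔ
      (by linarith) (by linarith)
    rw [show φ₁ - φ₀ - (φ - φ₀) = φ₁ - φ by ring] at hlow hhigh
    have hc : 0 < Real.sin (φ₁ - φ) + Real.sin (φ - φ₀) := lt_of_lt_of_le hs hlow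
    set u : ℂ := ((Real.sin (φ₁ - φ) / (Real.sin (φ₁ - φ) + Real.sin (φ - φ₀)) : ℝ):ℂ)
        * Complex.exp (φ₀ * Complex.I)
      + ((Real.sin (φ - φ₀) / (Real.sin (φ₁ - φ) + Real.sin (φ - φ₀)) : ℝ):ℂ)
        * Complex.exp (φ₁ * Complex.I) with hu_def
    have hsum1 : Real.sin (φ₁ - φ) / (Real.sin (φ₁ - φ) + Real.sin (φ - φ₀))
        + Real.sin (φ - φ₀) / (Real.sin (φ₁ - φ) + Real.sin (φ - φ₀)) = 1 := by
      field_simp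
    have hDCu : (r₀:ℂ) * u ∈ convexHull ℝ ({A, B, C, D} : Set ℂ) := by
      refine hconv.segment_subset hDm hCm ⟨_, _, div_nonneg hα hc.le, div_nonneg hβ hc.le,
        hsum1, ?_⟩
      rw [hD, hC, hu_def]
      simp only [Complex.real_smul, smul_eq_mul]; push_cast; ring
    have hABu : ((r₁ / Real.cos ((φ₁ - φ₀)/2) : ℝ):ℂ) * u
        ∈ convexHull ℝ ({A, B, C, D} : Set ℂ) := by
      refine hconv.segment_subset hAm hBm ⟨_, _, div_nonneg hα hc.le, div_nonneg hβ hc.le,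
        hsum1, ?_⟩
      rw [hA, hB, hu_def]
      simp only [Complex.real_smul, smul_eq_mul]; push_cast; ring
    have hkey := sin_comb_aux φ₀ φ₁ φ
    have hz_eq : (r:ℂ) * Complex.exp (φ * Complex.I)
        = ((r * (Real.sin (φ₁ - φ) + Real.sin (φ - φ₀)) / Real.sin (φ₁ - φ₀) : ℝ):ℂ) * u := by
      rw [hu_def]
      exact scale_aux hs.ne' hc.ne' _ _ _ hkey
    rw [hz_eq]
    have hb1 : r₀ ≤ r * (Real.sin (φ₁ - φ) + Real.sin (φ - φ₀)) / Real.sin (φ₁ - φ₀) := by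
      rw [le_div_iff₀ hs]; nlinarith
    have hb2 : r * (Real.sin (φ₁ - φ) + Real.sin (φ - φ₀)) / Real.sin (φ₁ - φ₀)
        ≤ r₁ / Real.cos ((φ₁ - φ₀)/2) := by
      rw [div_le_div_iff₀ hs hcpos]; nlinarith
    exact hconv.segment_subset hDCu hABu (seg_smul_aux hb1 hb2 u)
end
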